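/- Quality guarantee: Assume assoc_S(A) > 0 for every nonempty A ⊆ V', let A_0 ⊆ V' be feasible, let θ > 0 satisfy pen(A) ≥ θ for every nonempty infeasible A ⊆ V', and let γ > (vol_d(V)/θ)·(vol_g(A_0) + ν_S)/assoc_S(A_0), where vol_d(V) = ∑_{i∈V} d(i). Define R(A) = vol_g(A) + ν_S·unit(A) + γ·pen(A). If f : V' → ℝ with f ≥ 0, f ≠ 0 satisfies R^L(f)/assoc_S^L(f) < (vol_g(A_0) + ν_S)/assoc_S(A_0), then any threshold set A* ∈ {A_i(f) = {j : f(j) ≥ f(i)} : i ∈ V'} minimizing (vol_g(A_i(f)) + ν_S + γ·pen(A_i(f)))/assoc_S(A_i(f)) is feasible and satisfies assoc_S(A*)/(vol_g(A*) + ν_S) > assoc_S(A_0)/(vol_g(A_0) + ν_S). -/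

import Mathlib

open Finset

/-- `Vp S` is the set of experts `V' = V \ S`, as a subtype. -/
abbrev Vp {V : Type*} [Fintype V] [DecidableEq V] (S : Finset V) := {x : V // x ∉ S}

/-- The Lovász extension of a set function `T` (with `T ∅ = 0`): choosing an enumeration
`σ(1), …, σ(m)` of the ground set with `f ∘ σ` nondecreasing (here produced by `Tuple.sort`),
`T^L(f) = ∑_{i=1}^{m−1} T({σ(i+1),…,σ(m)})·(f(σ(i+1)) − f(σ(i))) + T(V')·f(σ(1))`. -/
noncomputable def lovasz {α : Type*} [Fintype α] [DecidableEq α]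
    (T : Finset α → ℝ) (f : α → ℝ) : ℝ :=
  let m := Fintype.card α
  let e : Fin m ≃ α := (Fintype.equivFin α).symm
  let σ : Fin m → α := fun i => e (Tuple.sort (f ∘ e) i)
  (∑ i : Fin m, if h : (i : ℕ) + 1 < m then
      T ((Finset.Ici (⟨(i : ℕ) + 1, h⟩ : Fin m)).image σ) * (f (σ ⟨(i : ℕ) + 1, h⟩) - f (σ i))
    else 0)
  + T Finset.univ * (if h : 0 < m then f (σ ⟨0, h⟩) else 0)

/-- The threshold set `A_i(f) = {j ∈ V' : f(j) ≥ f(i)}`. -/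
noncomputable def thresholdSet {α : Type*} [Fintype α] [DecidableEq α]
    (f : α → ℝ) (i : α) : Finset α :=
  Finset.univ.filter (fun j => f i ≤ f j)

/-!
At `f ≥ 0` the Lovász extension of any set function `T` is a nonnegative combination
`∑ₓ cₓ · T(A_x(f))` of its values on the threshold sets of `f`, with weights that do not all
vanish when `f ≠ 0`. Hence the best threshold ratio `R/assoc_S` is at most
`R^L(f)/assoc_S^L(f)`, which is below the ratio `c₀ = (vol_g(A_0) + ν_S)/assoc_S(A_0)`.
Since `assoc_S(A)` is the total weight inside `A ∪ S`, it is at most `vol_d(V)`, so an infeasible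
threshold set has ratio at least `γθ/vol_d(V) > c₀`. The minimizer is therefore feasible, its
penalty vanishes, and its ratio beats `c₀`.
-/

section LovaszExtension

variable {α : Type*} [Fintype α] [DecidableEq α]

theorem image_Ici_eq_thresholdSet {m : ℕ} {f : α → ℝ} {σ : Fin m ≃ α} (hσ : Monotone (f ∘ σ))
    {j : Fin m} (hj : ∀ i < j, f (σ i) < f (σ j)) :
    (Ici j).image σ = thresholdSet f (σ j) := by
  ext x
  obtain ⟨i, rfl⟩ := σ.surjective x
  simp only [thresholdSet, mem_image, mem_Ici, mem_filter, mem_univ, true_and,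
    EmbeddingLike.apply_eq_iff_eq, exists_eq_right]
  refine ⟨fun hji => hσ hji, fun hfi => ?_⟩
  by_contra! hij
  exact (hj i hij).not_ge hfi

theorem exists_layer_decomposition {m : ℕ} {f : α → ℝ} (hf : 0 ≤ f) (σ : Fin m ≃ α)
    (hσ : Monotone (f ∘ σ)) :
    ∃ δ : Fin m → ℝ, 0 ≤ δ ∧ (δ = 0 → f = 0) ∧ ∀ T : Finset α → ℝ,
      (∑ i : Fin m, if h : (i : ℕ) + 1 < m then
          T ((Ici (⟨(i : ℕ) + 1, h⟩ : Fin m)).image σ) * (f (σ ⟨(i : ℕ) + 1, h⟩) - f (σ i))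
        else 0)
      + T univ * (if h : 0 < m then f (σ ⟨0, h⟩) else 0)
      = ∑ j, δ j * T (thresholdSet f (σ j)) := by
  cases m with
  | zero => exact ⟨0, le_rfl, fun _ => funext fun x => (σ.symm x).elim0, fun T => by simp⟩
  | succ n =>
  have hstep : ∀ k : Fin n, f (σ k.castSucc) ≤ f (σ k.succ) :=
    fun k => hσ (Fin.castSucc_le_succ k)
  refine ⟨Fin.cons (f (σ 0)) fun k => f (σ k.succ) - f (σ k.castSucc), ?_, ?_, fun T => ?_⟩
  · exact Fin.cases (hf _) fun k => sub_nonneg.mpr (hstep k)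
  · intro hδ
    have hzero : ∀ j, f (σ j) = 0 := by
      refine Fin.induction (by simpa using congrFun hδ 0) fun k hk => ?_
      have := congrFun hδ k.succ
      simp only [Fin.cons_succ, Pi.zero_apply] at this
      linarith
    funext x
    simpa using hzero (σ.symm x)
  · have huniv : thresholdSet f (σ 0) = univ :=
      eq_univ_iff_forall.mpr fun x => by
        simpa [thresholdSet] using hσ (Fin.zero_le (σ.symm x))
    have hsucc : ∀ (k : Fin n) (h : (k : ℕ) + 1 < n + 1),
        (⟨(k : ℕ) + 1, h⟩ : Fin (n + 1)) = k.succ := fun _ _ => rfl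
    rw [Fin.sum_univ_castSucc, Fin.sum_univ_succ]
    simp only [Fin.val_castSucc, Fin.val_last, lt_self_iff_false, add_zero,
      Fin.cons_zero, Fin.cons_succ, huniv, Fin.is_lt, add_lt_add_iff_right, Nat.zero_lt_succ,
      ↓reduceDIte, hsucc, Fin.mk_zero]
    rw [add_comm, mul_comm (T univ)]
    refine congrArg _ (sum_congr rfl fun k _ => ?_)
    -- a layer of height zero contributes nothing; a layer of positive height is a threshold set
    rcases (hstep k).eq_or_lt with heq | hlt
    · simp [heq]
    · rw [mul_comm, image_Ici_eq_thresholdSet hσ fun i hi =>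
        (hσ (Fin.le_castSucc_iff.mpr hi)).trans_lt hlt]

theorem exists_lovasz_eq_sum_thresholdSet {f : α → ℝ} (hf : 0 ≤ f) :
    ∃ c : α → ℝ, 0 ≤ c ∧ (c = 0 → f = 0) ∧
      ∀ T : Finset α → ℝ, lovasz T f = ∑ x, c x * T (thresholdSet f x) := by
  let e : Fin (Fintype.card α) ≃ α := (Fintype.equivFin α).symm
  let σ := (Tuple.sort (f ∘ e)).trans e
  obtain ⟨δ, hδ, hδf, hT⟩ := exists_layer_decomposition hf σ (Tuple.monotone_sort (f ∘ e))
  refine ⟨δ ∘ σ.symm, fun x => hδ _,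
    fun hc => hδf (funext fun j => by simpa using congrFun hc (σ j)), fun T => ?_⟩
  rw [← σ.sum_comp]
  simp only [Function.comp_apply, Equiv.symm_apply_apply]
  exact hT T

theorem lovasz_pos {T : Finset α → ℝ} {f : α → ℝ} (hf : 0 ≤ f) (hf0 : f ≠ 0)
    (hT : ∀ x, 0 < T (thresholdSet f x)) : 0 < lovasz T f := by
  obtain ⟨c, hc, hcf, hL⟩ := exists_lovasz_eq_sum_thresholdSet hf
  obtain ⟨x, hx⟩ := Function.ne_iff.mp (mt hcf hf0)
  rw [hL]
  exact sum_pos' (fun y _ => mul_nonneg (hc y) (hT y).le)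
    ⟨x, mem_univ x, mul_pos ((hc x).lt_of_ne' hx) (hT x)⟩

theorem le_lovasz_div_lovasz {T₁ T₂ : Finset α → ℝ} {f : α → ℝ} {r : ℝ} (hf : 0 ≤ f)
    (hf0 : f ≠ 0) (hT₂ : ∀ x, 0 < T₂ (thresholdSet f x))
    (hr : ∀ x, r ≤ T₁ (thresholdSet f x) / T₂ (thresholdSet f x)) :
    r ≤ lovasz T₁ f / lovasz T₂ f := by
  obtain ⟨c, hc, -, hL⟩ := exists_lovasz_eq_sum_thresholdSet hf
  rw [le_div_iff₀ (lovasz_pos hf hf0 hT₂), hL, hL, mul_sum]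
  refine sum_le_sum fun x _ => ?_
  rw [mul_left_comm]
  exact mul_le_mul_of_nonneg_left ((le_div_iff₀ (hT₂ x)).mp (hr x)) (hc x)

end LovaszExtension

section Graph

variable {V : Type*} [Fintype V] [DecidableEq V] {w : V → V → ℝ} {S : Finset V}

theorem assoc_eq_sum_sum_union (hw : ∀ i j, w i j = w j i) (A : Finset (Vp S)) :
    (∑ i ∈ A, ∑ j, w i.1 j) - (∑ i ∈ A, ∑ j ∈ Aᶜ, w i.1 j.1) + (∑ i ∈ A, ∑ j ∈ S, w i.1 j)
        + ∑ i ∈ S, ∑ j ∈ S, w i j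
      = ∑ i ∈ A.map (Function.Embedding.subtype _) ∪ S,
          ∑ j ∈ A.map (Function.Embedding.subtype _) ∪ S, w i j := by
  have hrow : ∀ i : V, ∑ j, w i j = ∑ j ∈ S, w i j + (∑ j ∈ A, w i j.1 + ∑ j ∈ Aᶜ, w i j.1) := by
    intro i
    rw [sum_add_sum_compl, ← sum_add_sum_compl S (w i), sum_subtype Sᶜ (fun _ => mem_compl)]
  have hdisj : Disjoint (A.map (Function.Embedding.subtype _)) S :=
    disjoint_left.mpr fun x hx => by
      obtain ⟨y, -, rfl⟩ := mem_map.mp hx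
      exact y.2
  have hsymm : ∑ i ∈ S, ∑ j ∈ A, w i j.1 = ∑ i ∈ A, ∑ j ∈ S, w i.1 j := by
    rw [sum_comm]
    exact sum_congr rfl fun _ _ => sum_congr rfl fun _ _ => hw _ _
  simp only [sum_union hdisj, sum_add_distrib, sum_map, Function.Embedding.coe_subtype, hrow,
    hsymm]
  ring

theorem assoc_le_sum_sum (hw : ∀ i j, w i j = w j i) (hw_nonneg : ∀ i j, 0 ≤ w i j)
    (A : Finset (Vp S)) :
    (∑ i ∈ A, ∑ j, w i.1 j) - (∑ i ∈ A, ∑ j ∈ Aᶜ, w i.1 j.1) + (∑ i ∈ A, ∑ j ∈ S, w i.1 j)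
        + ∑ i ∈ S, ∑ j ∈ S, w i j ≤ ∑ i, ∑ j, w i j := by
  rw [assoc_eq_sum_sum_union hw]
  exact (sum_le_sum fun i _ => sum_le_sum_of_subset_of_nonneg (subset_univ _)
    fun j _ _ => hw_nonneg i j).trans
      (sum_le_sum_of_subset_of_nonneg (subset_univ _) fun i _ _ =>
        sum_nonneg fun j _ => hw_nonneg i j)

end Graph

section Penalty

variable {ι β : Type*} [Fintype ι]

def skillViolation (M : ι → β → ℝ) (k l : ι → ℝ) (dist : β → β → ℝ) (d0 : ℝ)
    (A : Finset β) : ℝ :=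
  (∑ j, max 0 ((∑ i ∈ A, M j i) - l j)) + (∑ j, max 0 (k j - ∑ i ∈ A, M j i))
    + ∑ u ∈ A, ∑ v ∈ A, max 0 (dist u v - d0)

variable {M : ι → β → ℝ} {k l : ι → ℝ} {dist : β → β → ℝ} {d0 : ℝ} {A : Finset β}

theorem skillViolation_eq_zero (hskills : ∀ j, k j ≤ ∑ i ∈ A, M j i ∧ ∑ i ∈ A, M j i ≤ l j)
    (hdist : ∀ u ∈ A, ∀ v ∈ A, dist u v ≤ d0) : skillViolation M k l dist d0 A = 0 := by
  have hupper : ∀ j, max 0 ((∑ i ∈ A, M j i) - l j) = 0 :=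
    fun j => max_eq_left (sub_nonpos.mpr (hskills j).2)
  have hlower : ∀ j, max 0 (k j - ∑ i ∈ A, M j i) = 0 :=
    fun j => max_eq_left (sub_nonpos.mpr (hskills j).1)
  have hpair : ∀ u ∈ A, ∀ v ∈ A, max 0 (dist u v - d0) = 0 :=
    fun u hu v hv => max_eq_left (sub_nonpos.mpr (hdist u hu v hv))
  simp only [skillViolation, hupper, hlower, sum_const_zero, zero_add]
  exact sum_eq_zero fun u hu => sum_eq_zero fun v hv => hpair u hu v hv

end Penalty

theorem lt_div_of_penalty_ge {a c D v θ γ P : ℝ} (hD : 0 < D) (hDv : D ≤ v) (hc : 0 ≤ c)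
    (ha : 0 ≤ a) (hθ : 0 < θ) (hγ : v / θ * c < γ) (hP : θ ≤ P) : c < (a + γ * P) / D := by
  have hvθ : v * c < γ * θ := by
    rwa [div_mul_eq_mul_div, div_lt_iff₀ hθ] at hγ
  have hγ0 : 0 ≤ γ :=
    (mul_nonneg (div_nonneg (hD.le.trans hDv) hθ.le) hc).trans hγ.le
  rw [lt_div_iff₀ hD]
  nlinarith [mul_le_mul_of_nonneg_left hDv hc, mul_le_mul_of_nonneg_left hP hγ0]

theorem quality_guarantee_general
    {V : Type*} [Fintype V] [DecidableEq V]
    (w : V → V → ℝ) (hw_symm : ∀ i j, w i j = w j i) (hw_nonneg : ∀ i j, 0 ≤ w i j)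
    (g : V → ℝ) (hg : ∀ i, 0 < g i)
    (S : Finset V)
    (p : ℕ)
    (M : Fin p → Vp S → ℝ) (k l : Fin p → ℝ)
    (dist : Vp S → Vp S → ℝ) (d0 : ℝ)
    -- the degree function d, the restricted degrees d^S, and the constants μ_S, ν_S
    (deg : V → ℝ) (hdeg : deg = fun i => ∑ j, w i j)
    (degS : Vp S → ℝ) (hdegS : degS = fun i => ∑ j ∈ S, w i.1 j)
    (muS nuS : ℝ) (hmuS : muS = ∑ i ∈ S, ∑ j ∈ S, w i j) (hnuS : nuS = ∑ i ∈ S, g i)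
    -- assoc_S(A) = vol_d(A) − cut(A, V'∖A) + vol_{d^S}(A) + μ_S·unit(A)
    (assocS : Finset (Vp S) → ℝ)
    (hassocS : assocS = fun A => (∑ i ∈ A, deg i.1) - (∑ i ∈ A, ∑ j ∈ Aᶜ, w i.1 j.1)
        + (∑ i ∈ A, degS i) + muS * (if A = ∅ then 0 else 1))
    -- the penalty function
    (pen : Finset (Vp S) → ℝ)
    (hpen : pen = fun A => if A = ∅ then 0 else
        (∑ j, max 0 ((∑ i ∈ A, M j i) - l j)) + (∑ j, max 0 (k j - ∑ i ∈ A, M j i))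
        + ∑ u ∈ A, ∑ v ∈ A, max 0 (dist u v - d0))
    -- feasibility
    (Feasible : Finset (Vp S) → Prop)
    (hFeas : Feasible = fun A => A.Nonempty
        ∧ (∀ j, k j ≤ (∑ i ∈ A, M j i) ∧ (∑ i ∈ A, M j i) ≤ l j)
        ∧ ∀ u ∈ A, ∀ v ∈ A, dist u v ≤ d0)
    -- assumptions of the theorem
    (hassoc_pos : ∀ A : Finset (Vp S), A.Nonempty → 0 < assocS A)
    (A0 : Finset (Vp S)) (hA0 : Feasible A0)
    (θ : ℝ) (hθ : 0 < θ)
    (hθpen : ∀ A : Finset (Vp S), A.Nonempty → ¬ Feasible A → θ ≤ pen A)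
    (γ : ℝ)
    (hγ : ((∑ i, deg i) / θ) * (((∑ i ∈ A0, g i.1) + nuS) / assocS A0) < γ)
    -- R(A) = vol_g(A) + ν_S·unit(A) + γ·pen(A)
    (R : Finset (Vp S) → ℝ)
    (hR : R = fun A => (∑ i ∈ A, g i.1) + nuS * (if A = ∅ then 0 else 1) + γ * pen A) :
    ∀ f : Vp S → ℝ, (∀ i, 0 ≤ f i) → f ≠ 0 →
      lovasz R f / lovasz assocS f < ((∑ i ∈ A0, g i.1) + nuS) / assocS A0 →
      ∀ i : Vp S,
        (∀ i' : Vp S,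
          ((∑ j ∈ thresholdSet f i, g j.1) + nuS + γ * pen (thresholdSet f i))
              / assocS (thresholdSet f i)
            ≤ ((∑ j ∈ thresholdSet f i', g j.1) + nuS + γ * pen (thresholdSet f i'))
              / assocS (thresholdSet f i')) →
        Feasible (thresholdSet f i)
        ∧ assocS A0 / ((∑ i ∈ A0, g i.1) + nuS)
            < assocS (thresholdSet f i) / ((∑ j ∈ thresholdSet f i, g j.1) + nuS) := by
  intro f hf hf0 hlov i hmin
  have hthr : ∀ x, (thresholdSet f x).Nonempty := fun x => ⟨x, by simp [thresholdSet]⟩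
  have hvol_pos : ∀ A : Finset (Vp S), A.Nonempty → 0 < (∑ j ∈ A, g j.1) + nuS := fun A hA =>
    add_pos_of_pos_of_nonneg (sum_pos (fun j _ => hg j.1) hA)
      (hnuS ▸ sum_nonneg fun j _ => (hg j).le)
  have hassoc_le : ∀ A : Finset (Vp S), A.Nonempty → assocS A ≤ ∑ i, deg i := fun A hA => by
    subst hassocS hdeg hdegS hmuS
    simpa [hA.ne_empty] using assoc_le_sum_sum hw_symm hw_nonneg A
  obtain ⟨hA0ne, -⟩ := hFeas ▸ hA0
  have hc0 : 0 ≤ ((∑ i ∈ A0, g i.1) + nuS) / assocS A0 :=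
    div_nonneg (hvol_pos A0 hA0ne).le (hassoc_pos A0 hA0ne).le
  have hratio : ((∑ j ∈ thresholdSet f i, g j.1) + nuS + γ * pen (thresholdSet f i))
      / assocS (thresholdSet f i) < ((∑ i ∈ A0, g i.1) + nuS) / assocS A0 := by
    refine lt_of_le_of_lt (le_lovasz_div_lovasz hf hf0 (fun x => hassoc_pos _ (hthr x))
      fun x => ?_) hlov
    simpa [hR, (hthr x).ne_empty] using hmin x
  have hfeas : Feasible (thresholdSet f i) := by
    by_contra hinfeas
    exact hratio.not_gt <| lt_div_of_penalty_ge (hassoc_pos _ (hthr i)) (hassoc_le _ (hthr i))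
      hc0 (hvol_pos _ (hthr i)).le hθ hγ (hθpen _ (hthr i) hinfeas)
  refine ⟨hfeas, ?_⟩
  obtain ⟨hne, hskills, hdist⟩ := hFeas ▸ hfeas
  have hpen0 : pen (thresholdSet f i) = 0 := by
    subst hpen
    exact (if_neg hne.ne_empty).trans (skillViolation_eq_zero hskills hdist)
  rw [hpen0, mul_zero, add_zero] at hratio
  simpa only [inv_div] using (inv_lt_inv₀ (div_pos (hvol_pos A0 hA0ne) (hassoc_pos A0 hA0ne))
    (div_pos (hvol_pos _ (hthr i)) (hassoc_pos _ (hthr i)))).mpr hratio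

/-- **Quality guarantee.** For `γ` above the exact-penalty threshold and
`R(A) = vol_g(A) + ν_S·unit(A) + γ·pen(A)`: if `f ≥ 0`, `f ≠ 0` satisfies
`R^L(f)/assoc_S^L(f) < (vol_g(A_0) + ν_S)/assoc_S(A_0)`, then any threshold set `A*` of `f`
minimizing `(vol_g(A_i(f)) + ν_S + γ·pen(A_i(f)))/assoc_S(A_i(f))` is feasible and satisfies
`assoc_S(A*)/(vol_g(A*) + ν_S) > assoc_S(A_0)/(vol_g(A_0) + ν_S)`. -/
theorem quality_guarantee
    {V : Type*} [Fintype V] [DecidableEq V] (hV : Nonempty V)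
    (w : V → V → ℝ) (hw_symm : ∀ i j, w i j = w j i) (hw_nonneg : ∀ i j, 0 ≤ w i j)
    (g : V → ℝ) (hg : ∀ i, 0 < g i)
    (S : Finset V) (hVp : Nonempty (Vp S))
    (p : ℕ) (hp : 1 ≤ p)
    (M : Fin p → Vp S → ℝ) (hM : ∀ j i, 0 ≤ M j i) (k l : Fin p → ℝ)
    (dist : Vp S → Vp S → ℝ) (hdist_symm : ∀ u v, dist u v = dist v u)
    (hdist_nonneg : ∀ u v, 0 ≤ dist u v) (d0 : ℝ) (hd0 : 0 ≤ d0)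
    -- the degree function d, the restricted degrees d^S, and the constants μ_S, ν_S
    (deg : V → ℝ) (hdeg : deg = fun i => ∑ j, w i j)
    (degS : Vp S → ℝ) (hdegS : degS = fun i => ∑ j ∈ S, w i.1 j)
    (muS nuS : ℝ) (hmuS : muS = ∑ i ∈ S, ∑ j ∈ S, w i j) (hnuS : nuS = ∑ i ∈ S, g i)
    -- assoc_S(A) = vol_d(A) − cut(A, V'∖A) + vol_{d^S}(A) + μ_S·unit(A)
    (assocS : Finset (Vp S) → ℝ)
    (hassocS : assocS = fun A => (∑ i ∈ A, deg i.1) - (∑ i ∈ A, ∑ j ∈ Aᶜ, w i.1 j.1)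
        + (∑ i ∈ A, degS i) + muS * (if A = ∅ then 0 else 1))
    -- the penalty function
    (pen : Finset (Vp S) → ℝ)
    (hpen : pen = fun A => if A = ∅ then 0 else
        (∑ j, max 0 ((∑ i ∈ A, M j i) - l j)) + (∑ j, max 0 (k j - ∑ i ∈ A, M j i))
        + ∑ u ∈ A, ∑ v ∈ A, max 0 (dist u v - d0))
    -- feasibility
    (Feasible : Finset (Vp S) → Prop)
    (hFeas : Feasible = fun A => A.Nonempty
        ∧ (∀ j, k j ≤ (∑ i ∈ A, M j i) ∧ (∑ i ∈ A, M j i) ≤ l j)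
        ∧ ∀ u ∈ A, ∀ v ∈ A, dist u v ≤ d0)
    -- assumptions of the theorem
    (hassoc_pos : ∀ A : Finset (Vp S), A.Nonempty → 0 < assocS A)
    (A0 : Finset (Vp S)) (hA0 : Feasible A0)
    (θ : ℝ) (hθ : 0 < θ)
    (hθpen : ∀ A : Finset (Vp S), A.Nonempty → ¬ Feasible A → θ ≤ pen A)
    (γ : ℝ)
    (hγ : ((∑ i, deg i) / θ) * (((∑ i ∈ A0, g i.1) + nuS) / assocS A0) < γ)
    -- R(A) = vol_g(A) + ν_S·unit(A) + γ·pen(A)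
    (R : Finset (Vp S) → ℝ)
    (hR : R = fun A => (∑ i ∈ A, g i.1) + nuS * (if A = ∅ then 0 else 1) + γ * pen A) :
    ∀ f : Vp S → ℝ, (∀ i, 0 ≤ f i) → f ≠ 0 →
      lovasz R f / lovasz assocS f < ((∑ i ∈ A0, g i.1) + nuS) / assocS A0 →
      ∀ i : Vp S,
        (∀ i' : Vp S,
          ((∑ j ∈ thresholdSet f i, g j.1) + nuS + γ * pen (thresholdSet f i))
              / assocS (thresholdSet f i)
            ≤ ((∑ j ∈ thresholdSet f i', g j.1) + nuS + γ * pen (thresholdSet f i'))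
              / assocS (thresholdSet f i')) →
        Feasible (thresholdSet f i)
        ∧ assocS A0 / ((∑ i ∈ A0, g i.1) + nuS)
            < assocS (thresholdSet f i) / ((∑ j ∈ thresholdSet f i, g j.1) + nuS) :=
  quality_guarantee_general w hw_symm hw_nonneg g hg S p M k l dist d0 deg hdeg degS hdegS muS nuS
    hmuS hnuS assocS hassocS pen hpen Feasible hFeas hassoc_pos A0 hA0 θ hθ hθpen γ hγ R hR
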